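/- Let S and T be the inductive limits of inductive sequences {S_k, φ_k : k ∈ ℕ} and {T_k, ψ_k : k ∈ ℕ} of operator systems, with canonical ucp maps φ^{(k)} : S_k → S and ψ^{(k)} : T_k → T. Suppose there exist ucp maps π_k : S_k → T_k such that ψ_k ∘ π_k = π_{k+1} ∘ φ_k for all k ∈ ℕ. Then there exists a unique ucp map π : S → T such that π ∘ φ^{(k)} = ψ^{(k)} ∘ π_k for all k ∈ ℕ. -/
import Mathlib


open scoped ComplexOrder TensorProduct

noncomputable section

/-- Conjugation `a A a*` of a matrix `A` over a complex `*`-vector space by a complex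
scalar matrix `a`. -/
def matCong {V : Type} [AddCommGroup V] [Module ℂ V] {ι κ : Type} [Fintype κ]
    (a : Matrix ι κ ℂ) (A : Matrix κ κ V) : Matrix ι ι V :=
  Matrix.of fun i j => ∑ s : κ, ∑ t : κ, (a i s * star (a j t)) • A s t

/-- The `n × n` matrix with a given element `e` on the diagonal and `0` elsewhere. -/
def unitMat {V : Type} [AddCommGroup V] (e : V) (n : ℕ) : Matrix (Fin n) (Fin n) V :=
  Matrix.of fun i j => if i = j then e else 0

/-- The `1 × 1` matrix with entry `x`. -/
def oneMat {V : Type} (x : V) : Matrix (Fin 1) (Fin 1) V :=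
  Matrix.of fun _ _ => x

/-- A matrix ordered `*`-vector space with a distinguished matrix order unit:
`pos n` is the cone in `Mₙ(V)` and `one` is the order unit.  The axioms making such
data an (abstract) operator system are collected in `PreOS.IsOpSys`. -/
structure PreOS : Type 1 where
  V : Type
  [grp : AddCommGroup V]
  [mod : Module ℂ V]
  [sam : StarAddMonoid V]
  [smod : StarModule ℂ V]
  pos : ∀ n : ℕ, Set (Matrix (Fin n) (Fin n) V)
  one : V

attribute [instance] PreOS.grp PreOS.mod PreOS.sam PreOS.smod

/-- The axioms of an operator system: a matrix ordered `*`-vector space with a proper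
matrix ordering and an Archimedean matrix order unit. -/
structure PreOS.IsOpSys (P : PreOS) : Prop where
  star_mem : ∀ n, ∀ A ∈ P.pos n, star A = A
  add_mem : ∀ n, ∀ A ∈ P.pos n, ∀ B ∈ P.pos n, A + B ∈ P.pos n
  smul_mem : ∀ n, ∀ A ∈ P.pos n, ∀ r : ℝ, 0 ≤ r → (r : ℂ) • A ∈ P.pos n
  cong_mem : ∀ (m n : ℕ) (a : Matrix (Fin m) (Fin n) ℂ), ∀ A ∈ P.pos n,
    matCong a A ∈ P.pos m
  proper : ∀ n, ∀ A ∈ P.pos n, -A ∈ P.pos n → A = 0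
  star_one : star P.one = P.one
  one_mem : ∀ n, unitMat P.one n ∈ P.pos n
  orderUnit : ∀ n (A : Matrix (Fin n) (Fin n) P.V), star A = A →
    ∃ r : ℝ, 0 < r ∧ (r : ℂ) • unitMat P.one n + A ∈ P.pos n
  arch : ∀ n (A : Matrix (Fin n) (Fin n) P.V), star A = A →
    (∀ ε : ℝ, 0 < ε → (ε : ℂ) • unitMat P.one n + A ∈ P.pos n) → A ∈ P.pos n

/-- A unital self-adjoint (`*`-preserving) linear map between matrix ordered spaces;
this is the underlying data of a unital completely positive map. -/
structure LinSU (P Q : PreOS) where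
  toLin : P.V →ₗ[ℂ] Q.V
  map_star : ∀ x, toLin (star x) = star (toLin x)
  map_one : toLin P.one = Q.one

/-- A unital completely positive map between matrix ordered `*`-vector spaces. -/
structure UCPmap (P Q : PreOS) extends LinSU P Q where
  map_pos : ∀ n, ∀ A ∈ P.pos n, A.map toLin ∈ Q.pos n

/-- The identity unital self-adjoint map. -/
def idLinSU (P : PreOS) : LinSU P P :=
  ⟨LinearMap.id, fun _ => rfl, rfl⟩

/-- A unital complete order monomorphism: injective and completely order reflecting. -/
structure IsCOMono {P Q : PreOS} (f : UCPmap P Q) : Prop where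
  inj : Function.Injective f.toLin
  reflect : ∀ n (A : Matrix (Fin n) (Fin n) P.V), A.map f.toLin ∈ Q.pos n → A ∈ P.pos n

/-! ## Operator subsystems -/

/-- A star-closed subspace containing the order unit: the data of an operator subsystem. -/
structure StarSubmodule (P : PreOS) where
  toSub : Submodule ℂ P.V
  star_mem' : ∀ x ∈ toSub, star x ∈ toSub
  one_mem' : P.one ∈ toSub

/-- The operator subsystem determined by a star-closed subspace containing the unit,
with the induced matrix cones. -/
def SubOS (P : PreOS) (W : StarSubmodule P) : PreOS :=
  letI : StarAddMonoid W.toSub :=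
    { star := fun x => ⟨star x.1, W.star_mem' x.1 x.2⟩
      star_involutive := fun x => Subtype.ext (star_star x.1)
      star_add := fun x y => Subtype.ext (star_add x.1 y.1) }
  letI : StarModule ℂ W.toSub := ⟨fun c x => Subtype.ext (star_smul c x.1)⟩
  { V := W.toSub
    pos := fun n => {A | A.map W.toSub.subtype ∈ P.pos n}
    one := ⟨P.one, W.one_mem'⟩ }

/-- The inclusion of a smaller operator subsystem into a bigger one. -/
def inclSub (P : PreOS) (W1 W2 : StarSubmodule P) (h : W1.toSub ≤ W2.toSub) :
    LinSU (SubOS P W1) (SubOS P W2) where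
  toLin := Submodule.inclusion h
  map_star := fun _ => rfl
  map_one := rfl

/-- The inclusion of an operator subsystem into the ambient system. -/
def subVal (P : PreOS) (W : StarSubmodule P) : LinSU (SubOS P W) P where
  toLin := W.toSub.subtype
  map_star := fun _ => rfl
  map_one := rfl

/-! ## The inductive limit construction -/

variable (S : ℕ → PreOS) (φ : ∀ k, LinSU (S k) (S (k + 1)))

/-- The space `S'` of eventually coherent sequences. -/
def coh : Submodule ℂ (∀ k, (S k).V) where
  carrier := {x | ∃ k0, ∀ k, k0 ≤ k → x (k + 1) = (φ k).toLin (x k)}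
  zero_mem' := ⟨0, fun k _ => by simp⟩
  add_mem' := by
    rintro x y ⟨a, ha⟩ ⟨b, hb⟩
    exact ⟨max a b, fun k hk => by
      simp [ha k (le_trans (le_max_left a b) hk), hb k (le_trans (le_max_right a b) hk)]⟩
  smul_mem' := by
    rintro c x ⟨a, ha⟩
    exact ⟨a, fun k hk => by simp [ha k hk]⟩

instance cohSAM : StarAddMonoid (coh S φ) where
  star x := ⟨star x.1, by
    obtain ⟨k0, h⟩ := x.2
    exact ⟨k0, fun k hk => by
      rw [Pi.star_apply, Pi.star_apply, h k hk, (φ k).map_star]⟩⟩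
  star_involutive x := Subtype.ext (star_star x.1)
  star_add x y := Subtype.ext (star_add x.1 y.1)

instance cohSMod : StarModule ℂ (coh S φ) := ⟨fun c x => Subtype.ext (star_smul c x.1)⟩

@[simp] lemma coh_star_coe (x : coh S φ) :
    ((star x : coh S φ) : ∀ k, (S k).V) = star (x : ∀ k, (S k).V) := rfl

/-- The subspace `K` of eventually zero (coherent) sequences. -/
def evK : Submodule ℂ (coh S φ) where
  carrier := {x | ∃ k0, ∀ k, k0 ≤ k → x.1 k = 0}
  zero_mem' := ⟨0, fun k _ => rfl⟩
  add_mem' := by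
    rintro x y ⟨a, ha⟩ ⟨b, hb⟩
    exact ⟨max a b, fun k hk => by
      show x.1 k + y.1 k = 0
      rw [ha k (le_trans (le_max_left a b) hk), hb k (le_trans (le_max_right a b) hk), add_zero]⟩
  smul_mem' := by
    rintro c x ⟨a, ha⟩
    exact ⟨a, fun k hk => by
      show c • x.1 k = 0
      rw [ha k hk, smul_zero]⟩

/-- The quotient space `S'/K`. -/
abbrev Qspace := coh S φ ⧸ evK S φ

lemma evK_star {x : coh S φ} (hx : x ∈ evK S φ) : star x ∈ evK S φ := by
  obtain ⟨k0, h⟩ := hx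
  exact ⟨k0, fun k hk => by
    show (star x.1) k = 0
    rw [Pi.star_apply, h k hk, star_zero]⟩

/-- The star operation on the quotient `S'/K`. -/
def qStar : Qspace S φ → Qspace S φ := fun x =>
  Quotient.liftOn' x (fun a => Submodule.Quotient.mk (star a)) (by
    intro a b h
    have hab : a - b ∈ evK S φ := by
      rw [← Submodule.Quotient.eq, ← Submodule.Quotient.mk''_eq_mk, ← Submodule.Quotient.mk''_eq_mk]
      exact Quotient.sound' h
    refine (Submodule.Quotient.eq _).2 ?_
    rw [← star_sub]
    exact evK_star S φ hab)

lemma qStar_mk (a : coh S φ) :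
    qStar S φ (Submodule.Quotient.mk a) = Submodule.Quotient.mk (star a) := rfl

instance qspaceSAM : StarAddMonoid (Qspace S φ) where
  star := qStar S φ
  star_involutive := fun x => Quotient.inductionOn' x fun a => by
    show qStar S φ (qStar S φ (Submodule.Quotient.mk a)) = Submodule.Quotient.mk a
    rw [qStar_mk, qStar_mk, star_star]
  star_add := fun x y => Quotient.inductionOn₂' x y fun a b => by
    show qStar S φ (Submodule.Quotient.mk a + Submodule.Quotient.mk b)
      = qStar S φ (Submodule.Quotient.mk a) + qStar S φ (Submodule.Quotient.mk b)
    rw [← Submodule.Quotient.mk_add, qStar_mk, qStar_mk, qStar_mk, star_add,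
      Submodule.Quotient.mk_add]

@[simp] lemma qspace_star_mk (a : coh S φ) :
    star (Submodule.Quotient.mk a : Qspace S φ) = Submodule.Quotient.mk (star a) := rfl

instance qspaceSMod : StarModule ℂ (Qspace S φ) where
  star_smul := fun c x => Quotient.inductionOn' x fun a => by
    rw [Submodule.Quotient.mk''_eq_mk, ← Submodule.Quotient.mk_smul, qspace_star_mk,
      qspace_star_mk, star_smul, Submodule.Quotient.mk_smul]

/-- The connecting maps `φ_{k,l} : S_k → S_l` of an inductive sequence. -/
def towerFun (k l : ℕ) (h : k ≤ l) (x : (S k).V) : (S l).V :=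
  Nat.leRecOn h (fun {m} y => (φ m).toLin y) x

/-- The sequence `\hat x` associated to `x ∈ S_k`: it is `0` before position `k`,
`x` at position `k` and `φ_{k,l}(x)` afterwards. -/
def hatSeq (k : ℕ) (x : (S k).V) : ∀ l, (S l).V := fun l =>
  if h : k ≤ l then towerFun S φ k l h x else 0

lemma hatSeq_mem (k : ℕ) (x : (S k).V) : hatSeq S φ k x ∈ coh S φ := by
  refine ⟨k, fun l hl => ?_⟩
  show hatSeq S φ k x (l + 1) = _
  rw [hatSeq, hatSeq, dif_pos hl, dif_pos (le_trans hl (Nat.le_succ l))]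
  exact Nat.leRecOn_succ (C := fun m => (S m).V) (next := fun {m} y => (φ m).toLin y) hl x

/-- The canonical map `φ^{(k)} : S_k → S'/K` into the inductive limit. -/
def limCan (k : ℕ) (x : (S k).V) : Qspace S φ :=
  Submodule.Quotient.mk ⟨hatSeq S φ k x, hatSeq_mem S φ k x⟩

/-- The set `D_n` of hermitian matrices over `S'` which are eventually coherent and
eventually positive. -/
def preD (n : ℕ) : Set (Matrix (Fin n) (Fin n) (coh S φ)) :=
  {A | star A = A ∧ ∃ k0, ∀ k, k0 ≤ k →
    (∀ i j, (A i j).1 (k + 1) = (φ k).toLin ((A i j).1 k)) ∧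
    (Matrix.of fun i j => (A i j).1 k) ∈ (S k).pos n}

/-- The matrix cones `M_n(S'/K)^+ = q_n(D_n)` on the quotient (before
Archimedeanization). -/
def quotPos (n : ℕ) : Set (Matrix (Fin n) (Fin n) (Qspace S φ)) :=
  {U | star U = U ∧ ∃ A ∈ preD S φ n,
    ∀ i j, (Submodule.Quotient.mk (A i j) : Qspace S φ) = U i j}

/-- The order unit of the inductive limit: the class of the sequence `(1_{S_k})_k`. -/
def limOne : Qspace S φ :=
  Submodule.Quotient.mk ⟨fun k => (S k).one, ⟨0, fun k _ => ((φ k).map_one).symm⟩⟩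

/-- The matrix cones of the inductive limit: the Archimedeanization of the cones
`q_n(D_n)` of the quotient `S'/K`. -/
def limPos (n : ℕ) : Set (Matrix (Fin n) (Fin n) (Qspace S φ)) :=
  {U | star U = U ∧ ∀ ε : ℝ, 0 < ε →
    (ε : ℂ) • unitMat (limOne S φ) n + U ∈ quotPos S φ n}

/-- The inductive limit of an inductive sequence of operator systems: the
Archimedeanization of the quotient `S'/K` with cones `q_n(D_n)` and order
unit `(1_{S_k}) + K`. -/
def indLim : PreOS where
  V := Qspace S φ
  pos := limPos S φ
  one := limOne S φ

/-- `L` (an operator-system datum) "is the inductive limit" of the inductive sequence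
`{S_k, φ_k}` along the compatible family `c_k : S_k → L`: the canonical map `Ψ`
from the constructed inductive limit to `L` induced by the `c_k` is a unital complete
order isomorphism. -/
def IsIndLimitOf (L : PreOS) (c : ∀ k, (S k).V → L.V) : Prop :=
  ∃ Ψ : (indLim S φ).V →ₗ[ℂ] L.V,
    (∀ k x, Ψ (limCan S φ k x) = c k x) ∧
    Function.Bijective Ψ ∧
    Ψ (indLim S φ).one = L.one ∧
    (∀ n (U : Matrix (Fin n) (Fin n) (indLim S φ).V),
      U ∈ (indLim S φ).pos n ↔ U.map Ψ ∈ L.pos n)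


section Ladder

variable {SS TT : ℕ → PreOS}
  (φφ : ∀ k, LinSU (SS k) (SS (k + 1))) (ψψ : ∀ k, LinSU (TT k) (TT (k + 1)))
  (ππ : ∀ k, LinSU (SS k) (TT k))
  (hcm : ∀ k x, (ψψ k).toLin ((ππ k).toLin x) = (ππ (k + 1)).toLin ((φφ k).toLin x))

lemma towerFun_ladder
    (hcm : ∀ k x, (ψψ k).toLin ((ππ k).toLin x) = (ππ (k + 1)).toLin ((φφ k).toLin x))
    {k l : ℕ} (h : k ≤ l) (x : (SS k).V) :
    (ππ l).toLin (towerFun SS φφ k l h x) = towerFun TT ψψ k l h ((ππ k).toLin x) := by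
  induction l, h using Nat.le_induction with
  | base => simp [towerFun, Nat.leRecOn_self]
  | succ l hl ih =>
    simp only [towerFun] at ih ⊢
    rw [Nat.leRecOn_succ (C := fun m => (SS m).V) (next := fun {m} y => (φφ m).toLin y) hl,
        Nat.leRecOn_succ (C := fun m => (TT m).V) (next := fun {m} y => (ψψ m).toLin y) hl,
        ← hcm, ih]

/-- The entrywise ladder map on coherent sequences. -/
def ladderCoh : coh SS φφ →ₗ[ℂ] coh TT ψψ where
  toFun x := ⟨fun k => (ππ k).toLin (x.1 k), by
    obtain ⟨k0, h⟩ := x.2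
    refine ⟨k0, fun k hk => ?_⟩
    show (ππ (k + 1)).toLin (x.1 (k + 1)) = (ψψ k).toLin ((ππ k).toLin (x.1 k))
    rw [h k hk, ← hcm]⟩
  map_add' x y := Subtype.ext (funext fun k => by
    show (ππ k).toLin (x.1 k + y.1 k) = _
    simp)
  map_smul' c x := Subtype.ext (funext fun k => by
    show (ππ k).toLin (c • x.1 k) = _
    simp)

lemma ladderCoh_apply (x : coh SS φφ) (k : ℕ) :
    (ladderCoh φφ ψψ ππ hcm x).1 k = (ππ k).toLin (x.1 k) := rfl

lemma ladderCoh_evK {x : coh SS φφ} (hx : x ∈ evK SS φφ) :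
    ladderCoh φφ ψψ ππ hcm x ∈ evK TT ψψ := by
  obtain ⟨k0, h⟩ := hx
  exact ⟨k0, fun k hk => by rw [ladderCoh_apply, h k hk, map_zero]⟩

/-- The induced map on the quotient `S'/K`. -/
def ladderQ : Qspace SS φφ →ₗ[ℂ] Qspace TT ψψ :=
  Submodule.liftQ _ ((evK TT ψψ).mkQ.comp (ladderCoh φφ ψψ ππ hcm)) (by
    intro x hx
    simp only [LinearMap.mem_ker, LinearMap.comp_apply, Submodule.mkQ_apply,
      Submodule.Quotient.mk_eq_zero]
    exact ladderCoh_evK φφ ψψ ππ hcm hx)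

lemma ladderQ_mk (a : coh SS φφ) :
    ladderQ φφ ψψ ππ hcm (Submodule.Quotient.mk a)
      = Submodule.Quotient.mk (ladderCoh φφ ψψ ππ hcm a) := rfl

lemma ladderCoh_star (x : coh SS φφ) :
    ladderCoh φφ ψψ ππ hcm (star x) = star (ladderCoh φφ ψψ ππ hcm x) :=
  Subtype.ext (funext fun k => (ππ k).map_star (x.1 k))

lemma ladderQ_star (u : Qspace SS φφ) :
    ladderQ φφ ψψ ππ hcm (star u) = star (ladderQ φφ ψψ ππ hcm u) := by
  obtain ⟨a, rfl⟩ := Submodule.Quotient.mk_surjective _ u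
  rw [qspace_star_mk, ladderQ_mk, ladderQ_mk, ladderCoh_star, qspace_star_mk]

lemma ladderQ_one : ladderQ φφ ψψ ππ hcm (limOne SS φφ) = limOne TT ψψ := by
  rw [limOne, ladderQ_mk, limOne]
  congr 1
  exact Subtype.ext (funext fun k => (ππ k).map_one)

lemma ladderCoh_hat (k : ℕ) (x : (SS k).V) :
    ladderCoh φφ ψψ ππ hcm ⟨hatSeq SS φφ k x, hatSeq_mem SS φφ k x⟩
      = ⟨hatSeq TT ψψ k ((ππ k).toLin x), hatSeq_mem TT ψψ k _⟩ := by
  refine Subtype.ext (funext fun l => ?_)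
  show (ππ l).toLin (hatSeq SS φφ k x l) = hatSeq TT ψψ k ((ππ k).toLin x) l
  by_cases h : k ≤ l
  · simp only [hatSeq, dif_pos h]
    exact towerFun_ladder φφ ψψ ππ hcm h x
  · simp [hatSeq, dif_neg h]

lemma ladderQ_limCan (k : ℕ) (x : (SS k).V) :
    ladderQ φφ ψψ ππ hcm (limCan SS φφ k x) = limCan TT ψψ k ((ππ k).toLin x) := by
  rw [limCan, ladderQ_mk, ladderCoh_hat, limCan]

lemma towerFun_of_coh (x : coh SS φφ) {k0 : ℕ}
    (h : ∀ k, k0 ≤ k → x.1 (k + 1) = (φφ k).toLin (x.1 k)) {l : ℕ} (hl : k0 ≤ l) :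
    towerFun SS φφ k0 l hl (x.1 k0) = x.1 l := by
  induction l, hl using Nat.le_induction with
  | base => simp [towerFun, Nat.leRecOn_self]
  | succ l hll ih =>
    simp only [towerFun] at ih ⊢
    rw [Nat.leRecOn_succ (C := fun m => (SS m).V) (next := fun {m} y => (φφ m).toLin y) hll,
      ih, ← h l hll]

lemma mk_eq_limCan (x : coh SS φφ) {k0 : ℕ}
    (h : ∀ k, k0 ≤ k → x.1 (k + 1) = (φφ k).toLin (x.1 k)) :
    (Submodule.Quotient.mk x : Qspace SS φφ) = limCan SS φφ k0 (x.1 k0) := by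
  rw [limCan, Submodule.Quotient.eq]
  refine ⟨k0, fun l hl => ?_⟩
  show x.1 l - hatSeq SS φφ k0 (x.1 k0) l = 0
  simp only [hatSeq, dif_pos hl]
  rw [towerFun_of_coh φφ x h hl, sub_self]

lemma ladderQ_map_star {n : ℕ} {U : Matrix (Fin n) (Fin n) (Qspace SS φφ)}
    (hU : star U = U) :
    star (U.map (ladderQ φφ ψψ ππ hcm)) = U.map (ladderQ φφ ψψ ππ hcm) := by
  refine Matrix.ext fun i j => ?_
  rw [Matrix.star_apply, Matrix.map_apply, Matrix.map_apply, ← ladderQ_star]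
  congr 1
  rw [← Matrix.star_apply, hU]

lemma ladderQ_quotPos
    (hπpos : ∀ k n A, A ∈ (SS k).pos n → A.map (ππ k).toLin ∈ (TT k).pos n)
    {n : ℕ} {U : Matrix (Fin n) (Fin n) (Qspace SS φφ)}
    (hU : U ∈ quotPos SS φφ n) :
    U.map (ladderQ φφ ψψ ππ hcm) ∈ quotPos TT ψψ n := by
  obtain ⟨hstar, A, ⟨hAstar, k0, hA⟩, hAU⟩ := hU
  refine ⟨ladderQ_map_star φφ ψψ ππ hcm hstar,
    Matrix.of fun i j => ladderCoh φφ ψψ ππ hcm (A i j),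
    ⟨?_, k0, fun k hk => ⟨?_, ?_⟩⟩, ?_⟩
  · refine Matrix.ext fun i j => ?_
    rw [Matrix.star_apply]
    show star (ladderCoh φφ ψψ ππ hcm (A j i)) = ladderCoh φφ ψψ ππ hcm (A i j)
    rw [← ladderCoh_star]
    congr 1
    rw [← Matrix.star_apply, hAstar]
  · intro i j
    show (ladderCoh φφ ψψ ππ hcm (A i j)).1 (k + 1)
      = (ψψ k).toLin ((ladderCoh φφ ψψ ππ hcm (A i j)).1 k)
    rw [ladderCoh_apply, ladderCoh_apply, (hA k hk).1 i j, ← hcm]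
  · have he : (Matrix.of fun i j =>
        ((Matrix.of fun i j => ladderCoh φφ ψψ ππ hcm (A i j)) i j).1 k)
        = (Matrix.of fun i j => (A i j).1 k).map (ππ k).toLin := rfl
    rw [he]
    exact hπpos k n _ (hA k hk).2
  · intro i j
    show (Submodule.Quotient.mk (ladderCoh φφ ψψ ππ hcm (A i j)) : Qspace TT ψψ)
      = ladderQ φφ ψψ ππ hcm (U i j)
    rw [← hAU i j, ladderQ_mk]

lemma ladderQ_limPos
    (hπpos : ∀ k n A, A ∈ (SS k).pos n → A.map (ππ k).toLin ∈ (TT k).pos n)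
    {n : ℕ} {U : Matrix (Fin n) (Fin n) (Qspace SS φφ)}
    (hU : U ∈ limPos SS φφ n) :
    U.map (ladderQ φφ ψψ ππ hcm) ∈ limPos TT ψψ n := by
  obtain ⟨hstar, h⟩ := hU
  refine ⟨ladderQ_map_star φφ ψψ ππ hcm hstar, fun ε hε => ?_⟩
  have hmap : (((ε : ℂ) • unitMat (limOne SS φφ) n + U).map (ladderQ φφ ψψ ππ hcm))
      = (ε : ℂ) • unitMat (limOne TT ψψ) n + U.map (ladderQ φφ ψψ ππ hcm) := by
    refine Matrix.ext fun i j => ?_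
    simp only [Matrix.map_apply, Matrix.add_apply, Matrix.smul_apply, map_add, map_smul,
      unitMat, Matrix.of_apply]
    split
    · rw [ladderQ_one]
    · rw [map_zero]
  rw [← hmap]
  exact ladderQ_quotPos φφ ψψ ππ hcm hπpos (h ε hε)

end Ladder

lemma UCPmap_ext {P Q : PreOS} {f g : UCPmap P Q} (h : f.toLin = g.toLin) : f = g := by
  obtain ⟨⟨f1, _, _⟩, _⟩ := f
  obtain ⟨⟨g1, _, _⟩, _⟩ := g
  have : f1 = g1 := h
  subst this
  rfl

/-- a compatible ladder of ucp maps `π_k : S_k → T_k` between two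
inductive sequences induces a unique ucp map between the inductive limits. -/
theorem statement6 (S : ℕ → PreOS) (hS : ∀ k, (S k).IsOpSys)
    (φ : ∀ k, UCPmap (S k) (S (k + 1)))
    (T : ℕ → PreOS) (hT : ∀ k, (T k).IsOpSys)
    (ψ : ∀ k, UCPmap (T k) (T (k + 1)))
    (π : ∀ k, UCPmap (S k) (T k))
    (hcomm : ∀ k x, (ψ k).toLin ((π k).toLin x) = (π (k + 1)).toLin ((φ k).toLin x)) :
    ∃! Φ : UCPmap (indLim S (fun k => (φ k).toLinSU)) (indLim T (fun k => (ψ k).toLinSU)),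
      ∀ k x, Φ.toLin (limCan S (fun k => (φ k).toLinSU) k x)
        = limCan T (fun k => (ψ k).toLinSU) k ((π k).toLin x) := by
  have hcm : ∀ k x, ((fun k => (ψ k).toLinSU) k).toLin (((fun k => (π k).toLinSU) k).toLin x)
      = ((fun k => (π k).toLinSU) (k + 1)).toLin (((fun k => (φ k).toLinSU) k).toLin x) :=
    hcomm
  have hπpos : ∀ k n A, A ∈ (S k).pos n →
      A.map ((fun k => (π k).toLinSU) k).toLin ∈ (T k).pos n :=
    fun k n A hA => (π k).map_pos n A hA
  refine ⟨⟨⟨ladderQ _ _ _ hcm,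
      ladderQ_star _ _ _ hcm,
      ladderQ_one _ _ _ hcm⟩,
      fun n A hA => ladderQ_limPos _ _ _ hcm hπpos hA⟩,
    fun k x => ladderQ_limCan _ _ _ hcm k x, ?_⟩
  intro Φ' hΦ'
  apply UCPmap_ext
  apply LinearMap.ext
  intro u
  obtain ⟨a, rfl⟩ := Submodule.Quotient.mk_surjective _ u
  obtain ⟨k0, h⟩ := a.2
  rw [mk_eq_limCan _ a h, hΦ' k0 (a.1 k0)]
  exact (ladderQ_limCan _ _ _ hcm k0 (a.1 k0)).symm

end
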